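/- Let γ = (α, σ) : ℝ → E × ℝ be a gradient flow line of the split interpolation function F. If σ(t₀) = 0 for some t₀, or σ(t₀) = 1 for some t₀, then σ is constant (identically 0, respectively identically 1) and α : ℝ → E is a gradient flow line of f. In particular, gradient flow lines of F through a point of the slice E × {1} remain in E × {1} and correspond exactly to gradient flow lines of f. -/

import Mathlib

/-!
The gradient of `F` splits as `∇F(x, s) = (∇f(x), C·h'(s))`, so a flow line `(α, σ)` of `F`
consists of a flow line `α` of `f` and a solution of the scalar autonomous ODE
`σ' = -C·h'(σ) = -3C·σ(σ - 1)`. The points `0` and `1` are equilibria of this ODE and its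
right-hand side is locally Lipschitz, so by uniqueness of solutions a solution meeting either
of them stays there for all time.
-/

open Filter Topology

/-- The interpolation profile `h(s) = s³ - (3/2)s²`. -/
noncomputable def hfun (s : ℝ) : ℝ := s ^ 3 - (3 / 2) * s ^ 2

/-- The split interpolation function `F(x,s) = f(x) + C·h(s)` on `E × ℝ`, where `E × ℝ`
carries the product (L²) inner product. -/
noncomputable def Fsplit {E : Type*} [NormedAddCommGroup E] [InnerProductSpace ℝ E]
    (f : E → ℝ) (C : ℝ) (p : WithLp 2 (E × ℝ)) : ℝ :=
  f ((WithLp.equiv 2 (E × ℝ)) p).1 + C * hfun ((WithLp.equiv 2 (E × ℝ)) p).2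

theorem hasDerivAt_hfun (s : ℝ) : HasDerivAt hfun (3 * s ^ 2 - 3 * s) s := by
  have h := (hasDerivAt_pow 3 s).sub ((hasDerivAt_pow 2 s).const_mul (3 / 2 : ℝ))
  exact h.congr_deriv (by push_cast; ring)

section WithLpProd

variable {𝕜 E F : Type*} [NormedAddCommGroup E] [NormedAddCommGroup F]

theorem HasDerivAt.of_toLp_prodMk [NontriviallyNormedField 𝕜] [NormedSpace 𝕜 E]
    [NormedSpace 𝕜 F] {p : ENNReal} [Fact (1 ≤ p)] {α : 𝕜 → E} {σ : 𝕜 → F} {a : E} {b : F}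
    {t : 𝕜} (h : HasDerivAt (fun u => WithLp.toLp p (α u, σ u)) (WithLp.toLp p (a, b)) t) :
    HasDerivAt α a t ∧ HasDerivAt σ b t :=
  ⟨(WithLp.fstL p 𝕜 E F).hasFDerivAt.comp_hasDerivAt t h,
    (WithLp.sndL p 𝕜 E F).hasFDerivAt.comp_hasDerivAt t h⟩

variable [InnerProductSpace ℝ E] [InnerProductSpace ℝ F] [CompleteSpace E] [CompleteSpace F]

theorem HasGradientAt.withLp_prod_add {g : E → ℝ} {k : F → ℝ} {x : E} {y : F} {g' : E}
    {k' : F} (hg : HasGradientAt g g' x) (hk : HasGradientAt k k' y) :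
    HasGradientAt (fun p : WithLp 2 (E × F) => g p.ofLp.1 + k p.ofLp.2)
      (WithLp.toLp 2 (g', k')) (WithLp.toLp 2 (x, y)) := by
  rw [hasGradientAt_iff_hasFDerivAt] at *
  refine ((hg.comp (WithLp.toLp 2 (x, y)) (WithLp.fstL 2 ℝ E F).hasFDerivAt).add
    (hk.comp (WithLp.toLp 2 (x, y)) (WithLp.sndL 2 ℝ E F).hasFDerivAt)).congr_fderiv ?_
  ext v
  simp

end WithLpProd

theorem gradient_Fsplit {E : Type*} [NormedAddCommGroup E] [InnerProductSpace ℝ E]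
    [CompleteSpace E] {f : E → ℝ} (hf : Differentiable ℝ f) (C : ℝ) (x : E) (s : ℝ) :
    gradient (Fsplit f C) (WithLp.toLp 2 (x, s)) =
      WithLp.toLp 2 (gradient f x, C * (3 * s ^ 2 - 3 * s)) :=
  ((hf x).hasGradientAt.withLp_prod_add ((hasDerivAt_hfun s).const_mul C).hasGradientAt').gradient

theorem ODE_solution_eq_const_of_equilibrium {E : Type*} [NormedAddCommGroup E]
    [NormedSpace ℝ E] {v : E → E} (hv : LocallyLipschitz v) {x : ℝ → E}
    (hx : ∀ t, HasDerivAt x (v (x t)) t) {c : E} (hc : v c = 0) {t₀ : ℝ} (h₀ : x t₀ = c)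
    (t : ℝ) : x t = c := by
  have hcont : Continuous x := continuous_iff_continuousAt.2 fun t => (hx t).continuousAt
  have hopen : IsOpen {t | x t = c} := by
    refine isOpen_iff_mem_nhds.2 fun t₁ (ht₁ : x t₁ = c) => ?_
    obtain ⟨K, U, hU, hlip⟩ := hv c
    have hxU : ∀ᶠ t in 𝓝 t₁, x t ∈ U := hcont.continuousAt.preimage_mem_nhds (ht₁ ▸ hU)
    have hconst : ∀ t, HasDerivAt (fun _ => c) (v c) t := fun t =>
      hc ▸ hasDerivAt_const (𝕜 := ℝ) t c
    exact ODE_solution_unique_of_eventually (v := fun _ => v) (s := fun _ => U)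
      (.of_forall fun _ => hlip) (hxU.mono fun t ht => ⟨hx t, ht⟩)
      (.of_forall fun t => ⟨hconst t, mem_of_mem_nhds hU⟩) ht₁
  have hclosed : IsClosed {t | x t = c} := isClosed_eq hcont continuous_const
  exact Set.eq_univ_iff_forall.1 (IsClopen.eq_univ ⟨hclosed, hopen⟩ ⟨t₀, h₀⟩) t

theorem flow_in_slice_general {E : Type*} [NormedAddCommGroup E] [InnerProductSpace ℝ E]
    [CompleteSpace E] (f : E → ℝ) (hf : Differentiable ℝ f) (C : ℝ)
    (α : ℝ → E) (σ : ℝ → ℝ)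
    (hflow : ∀ t : ℝ, HasDerivAt (fun u => (WithLp.equiv 2 (E × ℝ)).symm (α u, σ u))
        (-(gradient (Fsplit f C) ((WithLp.equiv 2 (E × ℝ)).symm (α t, σ t)))) t) :
    ((∃ t₀ : ℝ, σ t₀ = 0) →
      (∀ t : ℝ, σ t = 0) ∧ ∀ t : ℝ, HasDerivAt α (-(gradient f (α t))) t) ∧
    ((∃ t₀ : ℝ, σ t₀ = 1) →
      (∀ t : ℝ, σ t = 1) ∧ ∀ t : ℝ, HasDerivAt α (-(gradient f (α t))) t) := by
  have hcomponents (t : ℝ) : HasDerivAt α (-gradient f (α t)) t ∧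
      HasDerivAt σ (-(C * (3 * σ t ^ 2 - 3 * σ t))) t := by
    apply HasDerivAt.of_toLp_prodMk (p := 2)
    simpa only [WithLp.equiv_symm_apply, gradient_Fsplit hf, ← WithLp.toLp_neg, Prod.neg_mk]
      using hflow t
  have hlip : LocallyLipschitz fun s : ℝ => -(C * (3 * s ^ 2 - 3 * s)) :=
    ContDiff.locallyLipschitz (𝕂 := ℝ) (by fun_prop)
  have hσ {c : ℝ} (hc : -(C * (3 * c ^ 2 - 3 * c)) = 0) : (∃ t₀, σ t₀ = c) → ∀ t, σ t = c :=
    fun ⟨_, h₀⟩ => ODE_solution_eq_const_of_equilibrium hlip (fun t => (hcomponents t).2) hc h₀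
  exact ⟨fun h => ⟨hσ (by ring) h, fun t => (hcomponents t).1⟩,
    fun h => ⟨hσ (by ring) h, fun t => (hcomponents t).1⟩⟩

/-- If the ℝ-component `σ` of a gradient flow line `γ = (α, σ)` of the split
interpolation function `F` takes the value `0` (resp. `1`) somewhere, then `σ` is
identically `0` (resp. `1`) and `α` is a gradient flow line of `f`. -/
theorem flow_in_slice {E : Type*} [NormedAddCommGroup E] [InnerProductSpace ℝ E]
    [CompleteSpace E] (f : E → ℝ) (hf : Differentiable ℝ f) (C : ℝ) (hC : 0 < C)
    (α : ℝ → E) (σ : ℝ → ℝ)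
    (hflow : ∀ t : ℝ, HasDerivAt (fun u => (WithLp.equiv 2 (E × ℝ)).symm (α u, σ u))
        (-(gradient (Fsplit f C) ((WithLp.equiv 2 (E × ℝ)).symm (α t, σ t)))) t) :
    ((∃ t₀ : ℝ, σ t₀ = 0) →
      (∀ t : ℝ, σ t = 0) ∧ ∀ t : ℝ, HasDerivAt α (-(gradient f (α t))) t) ∧
    ((∃ t₀ : ℝ, σ t₀ = 1) →
      (∀ t : ℝ, σ t = 1) ∧ ∀ t : ℝ, HasDerivAt α (-(gradient f (α t))) t) :=
  flow_in_slice_general f hf C α σ hflow
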